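/- arXiv:2012.13709 — 2 statements merged into one kernel-verified Lean document; each statement's English description precedes it below -/
import Mathlib

section
/- Let Ω ⊆ ℝⁿ be an open set and let 𝔍 be a smooth totally antisymmetric third-order contravariant tensor field on Ω. Define the ternary bracket of smooth functions by {F₁,F₂,F₃} := Σ_{i,j,k} 𝔍^{ijk} ∂_iF₁ ∂_jF₂ ∂_kF₃. Suppose the fundamental identity holds: {{F₁,F₂,F₃},F₄,F₅} = {{F₁,F₄,F₅},F₂,F₃} + {F₁,{F₂,F₄,F₅},F₃} + {F₁,F₂,{F₃,F₄,F₅}} for all smooth F₁,…,F₅ : Ω → ℝ. Then for every smooth G : Ω → ℝ, the binary bracket [F,H]_G := {F,G,H} satisfies the Jacobi identity [F,[H,K]_G]_G + [H,[K,F]_G]_G + [K,[F,H]_G]_G = 0 for all smooth F,H,K : Ω → ℝ; i.e., fixing the middle entry of a Nambu bracket satisfying the fundamental identity yields a bracket satisfying the Jacobi identity. -/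
/-- Partial derivative in the `i`-th coordinate direction. -/
noncomputable def pd {n : ℕ} (i : Fin n) (f : (Fin n → ℝ) → ℝ) (x : Fin n → ℝ) : ℝ :=
  fderiv ℝ f x (Pi.single i 1)

/-- The Nambu bracket `{F₁,F₂,F₃} = Σ_{i,j,k} 𝔍ⁱʲᵏ ∂ᵢF₁ ∂ⱼF₂ ∂ₖF₃` associated with a
third-order tensor field `Jt`. -/
noncomputable def nb {n : ℕ} (Jt : (Fin n → ℝ) → Fin n → Fin n → Fin n → ℝ)
    (F₁ F₂ F₃ : (Fin n → ℝ) → ℝ) (x : Fin n → ℝ) : ℝ :=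
  ∑ i, ∑ j, ∑ k, Jt x i j k * pd i F₁ x * pd j F₂ x * pd k F₃ x

lemma pd_neg' {n : ℕ} (i : Fin n) (f : (Fin n → ℝ) → ℝ) (x : Fin n → ℝ) :
    pd i (fun y => -(f y)) x = - pd i f x := by
  unfold pd
  rw [fderiv_fun_neg]
  simp

lemma pd_zero' {n : ℕ} (i : Fin n) (x : Fin n → ℝ) :
    pd i (fun _ => (0:ℝ)) x = 0 := by
  unfold pd
  simp

lemma sum3_swap' {n : ℕ} (f : Fin n → Fin n → Fin n → ℝ) :
    ∑ i, ∑ j, ∑ k, f i j k = ∑ k, ∑ j, ∑ i, f i j k := by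
  rw [Finset.sum_comm]
  rw [show (∑ j, ∑ i, ∑ k, f i j k) = ∑ j, ∑ k, ∑ i, f i j k from
    Finset.sum_congr rfl fun _ _ => Finset.sum_comm]
  exact Finset.sum_comm

/-- Swapping the outer (1st and 3rd) entries of the Nambu bracket changes the sign. -/
lemma nb_swap13 {n : ℕ} (Jt : (Fin n → ℝ) → Fin n → Fin n → Fin n → ℝ)
    (hskew12 : ∀ x, ∀ i j k, Jt x i j k = - Jt x j i k)
    (hskew23 : ∀ x, ∀ i j k, Jt x i j k = - Jt x i k j)
    (A B C : (Fin n → ℝ) → ℝ) (x : Fin n → ℝ) :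
    nb Jt A B C x = - nb Jt C B A x := by
  have hskew13 : ∀ i j k, Jt x i j k = - Jt x k j i := by
    intro i j k
    rw [hskew12, hskew23, hskew12]
    ring
  unfold nb
  rw [← Finset.sum_neg_distrib]
  rw [show (∑ k, -∑ j, ∑ i, Jt x k j i * pd k C x * pd j B x * pd i A x)
      = ∑ k, ∑ j, ∑ i, -(Jt x k j i * pd k C x * pd j B x * pd i A x) by
    simp [Finset.sum_neg_distrib]]
  rw [sum3_swap' (f := fun i j k => Jt x i j k * pd i A x * pd j B x * pd k C x)]
  refine Finset.sum_congr rfl fun k _ => Finset.sum_congr rfl fun j _ =>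
    Finset.sum_congr rfl fun i _ => ?_
  rw [hskew13 i j k]
  ring

/-- Swapping the first two entries of the Nambu bracket changes the sign. -/
lemma nb_swap12 {n : ℕ} (Jt : (Fin n → ℝ) → Fin n → Fin n → Fin n → ℝ)
    (hskew12 : ∀ x, ∀ i j k, Jt x i j k = - Jt x j i k)
    (A B C : (Fin n → ℝ) → ℝ) (x : Fin n → ℝ) :
    nb Jt A B C x = - nb Jt B A C x := by
  unfold nb
  rw [← Finset.sum_neg_distrib]
  rw [show (∑ i, -∑ j, ∑ k, Jt x i j k * pd i B x * pd j A x * pd k C x)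
      = ∑ i, ∑ j, ∑ k, -(Jt x i j k * pd i B x * pd j A x * pd k C x) by
    simp [Finset.sum_neg_distrib]]
  rw [Finset.sum_comm]
  refine Finset.sum_congr rfl fun j _ => Finset.sum_congr rfl fun i _ =>
    Finset.sum_congr rfl fun k _ => ?_
  rw [hskew12 x j i k]
  ring

/-- A Nambu bracket with two equal entries vanishes. -/
lemma nb_same12 {n : ℕ} (Jt : (Fin n → ℝ) → Fin n → Fin n → Fin n → ℝ)
    (hskew12 : ∀ x, ∀ i j k, Jt x i j k = - Jt x j i k)
    (A C : (Fin n → ℝ) → ℝ) (x : Fin n → ℝ) :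
    nb Jt A A C x = 0 := by
  have h := nb_swap12 Jt hskew12 A A C x
  linarith

/-- Negating the first argument negates the bracket. -/
lemma nb_neg1 {n : ℕ} (Jt : (Fin n → ℝ) → Fin n → Fin n → Fin n → ℝ)
    (A B C : (Fin n → ℝ) → ℝ) (x : Fin n → ℝ) :
    nb Jt (fun y => -(A y)) B C x = - nb Jt A B C x := by
  unfold nb
  rw [← Finset.sum_neg_distrib]
  refine Finset.sum_congr rfl fun i _ => ?_
  rw [← Finset.sum_neg_distrib]
  refine Finset.sum_congr rfl fun j _ => ?_
  rw [← Finset.sum_neg_distrib]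
  refine Finset.sum_congr rfl fun k _ => ?_
  rw [pd_neg']
  ring

/-- A bracket with the zero function in the middle vanishes. -/
lemma nb_zero2 {n : ℕ} (Jt : (Fin n → ℝ) → Fin n → Fin n → Fin n → ℝ)
    (A C : (Fin n → ℝ) → ℝ) (x : Fin n → ℝ) :
    nb Jt A (fun _ => (0:ℝ)) C x = 0 := by
  unfold nb
  refine Finset.sum_eq_zero fun i _ => Finset.sum_eq_zero fun j _ =>
    Finset.sum_eq_zero fun k _ => ?_
  rw [pd_zero']
  ring

/-- If the Nambu bracket of a smooth totally antisymmetric third-order tensor field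
satisfies the fundamental identity, then fixing the middle entry with any smooth `G`
yields a binary bracket `[F,H]_G = {F,G,H}` satisfying the Jacobi identity. -/
theorem fundamental_identity_implies_jacobi {n : ℕ}
    (Ω : Set (Fin n → ℝ)) (hΩ : IsOpen Ω)
    (Jt : (Fin n → ℝ) → Fin n → Fin n → Fin n → ℝ)
    (hsmooth : ∀ i j k, ContDiffOn ℝ (⊤ : ℕ∞) (fun x => Jt x i j k) Ω)
    (hskew12 : ∀ x, ∀ i j k, Jt x i j k = - Jt x j i k)
    (hskew23 : ∀ x, ∀ i j k, Jt x i j k = - Jt x i k j)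
    (hFI : ∀ F₁ F₂ F₃ F₄ F₅ : (Fin n → ℝ) → ℝ,
      ContDiffOn ℝ (⊤ : ℕ∞) F₁ Ω → ContDiffOn ℝ (⊤ : ℕ∞) F₂ Ω → ContDiffOn ℝ (⊤ : ℕ∞) F₃ Ω →
      ContDiffOn ℝ (⊤ : ℕ∞) F₄ Ω → ContDiffOn ℝ (⊤ : ℕ∞) F₅ Ω →
      ∀ x ∈ Ω,
        nb Jt (nb Jt F₁ F₂ F₃) F₄ F₅ x
          = nb Jt (nb Jt F₁ F₄ F₅) F₂ F₃ x + nb Jt F₁ (nb Jt F₂ F₄ F₅) F₃ x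
            + nb Jt F₁ F₂ (nb Jt F₃ F₄ F₅) x) :
    ∀ G : (Fin n → ℝ) → ℝ, ContDiffOn ℝ (⊤ : ℕ∞) G Ω →
      ∀ F H K : (Fin n → ℝ) → ℝ,
        ContDiffOn ℝ (⊤ : ℕ∞) F Ω → ContDiffOn ℝ (⊤ : ℕ∞) H Ω → ContDiffOn ℝ (⊤ : ℕ∞) K Ω →
        ∀ x ∈ Ω,
          nb Jt F G (nb Jt H G K) x + nb Jt H G (nb Jt K G F) x
            + nb Jt K G (nb Jt F G H) x = 0 := by
  intro G hG F H K hF hH hK x hx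
  -- Fundamental identity with (F₁,F₂,F₃,F₄,F₅) = (H,G,K,G,F)
  have fi := hFI H G K G F hH hG hK hG hF x hx
  -- the middle term vanishes since nb Jt G G F ≡ 0
  have hGGF : nb Jt G G F = fun _ => (0:ℝ) :=
    funext fun y => nb_same12 Jt hskew12 G F y
  rw [hGGF, nb_zero2] at fi
  -- rewrite nb Jt H G F as -(nb Jt F G H)
  have hHGF : nb Jt H G F = fun y => -(nb Jt F G H y) :=
    funext fun y => nb_swap13 Jt hskew12 hskew23 H G F y
  rw [hHGF, nb_neg1] at fi
  -- antisymmetry of the outer entries at the point x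
  have e1 : nb Jt F G (nb Jt H G K) x = - nb Jt (nb Jt H G K) G F x :=
    nb_swap13 Jt hskew12 hskew23 _ _ _ x
  have e2 : nb Jt K G (nb Jt F G H) x = - nb Jt (nb Jt F G H) G K x :=
    nb_swap13 Jt hskew12 hskew23 _ _ _ x
  linarith
end

section
/- Let E be the totally antisymmetric third-order tensor on ℝ⁶ determined by E^{123} = 1 and E^{456} = 1, with E^{abc} = 0 unless {a,b,c} = {1,2,3} or {a,b,c} = {4,5,6}. Let Ω ⊆ ℝ⁶ be open, G : Ω → ℝ smooth, and set 𝒥_G^{ac} := Σ_b E^{abc} ∂_bG. Then for any index a ∈ {1,2,3} and any indices c,d ∈ {4,5,6}, the Jacobi expression satisfies, at every point of Ω: Σ_m (𝒥_G^{am} ∂_m𝒥_G^{cd} + 𝒥_G^{cm} ∂_m𝒥_G^{da} + 𝒥_G^{dm} ∂_m𝒥_G^{ac}) = Σ_{m,b,e} E^{amb} E^{cde} (∂_bG)(∂_e∂_mG). -/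
/-- The block Levi-Civita tensor `E` on `ℝ⁶`: totally antisymmetric, `E^{123} = E^{456} = 1`
(0-based: `E 0 1 2 = E 3 4 5 = 1`), vanishing unless all three indices lie in the same
canonical triplet `{1,2,3}` or `{4,5,6}`.  On each block the polynomial formula gives the
permutation sign (and `0` when two indices coincide). -/
noncomputable def E6 (a b c : Fin 6) : ℝ :=
  if (a.val < 3 ∧ b.val < 3 ∧ c.val < 3) ∨ (3 ≤ a.val ∧ 3 ≤ b.val ∧ 3 ≤ c.val) then
    (((b.val : ℝ) - (a.val : ℝ)) * ((c.val : ℝ) - (a.val : ℝ))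
      * ((c.val : ℝ) - (b.val : ℝ))) / 2
  else 0

/-- The skew matrix field `𝒥_G^{ac} = Σ_b E^{abc} ∂_bG` induced by fixing the middle entry
of the direct-sum canonical Nambu bracket on `ℝ⁶` with a function `G`. -/
noncomputable def JG6 (G : (Fin 6 → ℝ) → ℝ) (x : Fin 6 → ℝ) (a c : Fin 6) : ℝ :=
  ∑ b, E6 a b c * pd b G x

lemma E6_zero_of_not {a b c : Fin 6}
    (h : ¬((a.val < 3 ∧ b.val < 3 ∧ c.val < 3) ∨ (3 ≤ a.val ∧ 3 ≤ b.val ∧ 3 ≤ c.val))) :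
    E6 a b c = 0 := if_neg h

lemma E6_swap23 (a b c : Fin 6) : E6 a b c = - E6 a c b := by
  unfold E6
  by_cases h : (a.val < 3 ∧ b.val < 3 ∧ c.val < 3) ∨ (3 ≤ a.val ∧ 3 ≤ b.val ∧ 3 ≤ c.val)
  · rw [if_pos h, if_pos (by tauto)]; ring
  · rw [if_neg h, if_neg (by tauto)]; ring

lemma pd_zero_fun {n : ℕ} (μ : Fin n) (x : Fin n → ℝ) : pd μ (fun _ => (0:ℝ)) x = 0 := by
  simp [pd]

/-- For `a` in the first canonical triplet and `c,d` in the second one, the Jacobi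
expression of `𝒥_G` reduces to `Σ_{m,b,e} E^{amb} E^{cde} (∂_bG)(∂_e∂_mG)`. -/
theorem jacobi_expression_mixed_triplets
    (Ω : Set (Fin 6 → ℝ)) (hΩ : IsOpen Ω)
    (G : (Fin 6 → ℝ) → ℝ) (hG : ContDiffOn ℝ (⊤ : ℕ∞) G Ω)
    (a c d : Fin 6) (ha : a.val < 3) (hc : 3 ≤ c.val) (hd : 3 ≤ d.val) :
    ∀ x ∈ Ω,
      ∑ μ, (JG6 G x a μ * pd μ (fun y => JG6 G y c d) x
          + JG6 G x c μ * pd μ (fun y => JG6 G y d a) x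
          + JG6 G x d μ * pd μ (fun y => JG6 G y a c) x)
        = ∑ μ, ∑ b, ∑ e,
            E6 a μ b * E6 c d e * pd b G x * pd e (fun y => pd μ G y) x := by
  intro x hx
  have hGx : ContDiffAt ℝ (⊤ : ℕ∞) G x := hG.contDiffAt (hΩ.mem_nhds hx)
  have hf' : ContDiffAt ℝ (⊤ : ℕ∞) (fderiv ℝ G) x := hGx.fderiv_right (by simp)
  have hd1 : ∀ m : Fin 6, DifferentiableAt ℝ (fun y => pd m G y) x := by
    intro m
    exact (hf'.differentiableAt (by simp)).clm_apply (differentiableAt_const _)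
  -- second derivatives as the bilinear second fderiv
  have key : ∀ m e : Fin 6, pd e (fun y => pd m G y) x
      = fderiv ℝ (fderiv ℝ G) x (Pi.single e 1) (Pi.single m 1) := by
    intro m e
    have h := fderiv_clm_apply (hf'.differentiableAt (by simp))
      (differentiableAt_const (Pi.single m 1 : Fin 6 → ℝ))
    simp only [pd]
    rw [h]
    simp
  have hsymm : IsSymmSndFDerivAt ℝ G x := by
    exact hGx.isSymmSndFDerivAt (by rw [minSmoothness_of_isRCLikeNormedField]; exact WithTop.coe_le_coe.mpr (le_top : (2 : ℕ∞) ≤ ⊤))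
  have hsym : ∀ m e : Fin 6, pd e (fun y => pd m G y) x = pd m (fun y => pd e G y) x := by
    intro m e
    rw [key, key, hsymm.eq]
  -- vanishing of mixed JG6
  have hJda : (fun y => JG6 G y d a) = fun _ => (0:ℝ) := by
    funext y
    simp only [JG6]
    apply Finset.sum_eq_zero
    intro b _
    rw [E6_zero_of_not (by omega)]
    ring
  have hJac : (fun y => JG6 G y a c) = fun _ => (0:ℝ) := by
    funext y
    simp only [JG6]
    apply Finset.sum_eq_zero
    intro b _
    rw [E6_zero_of_not (by omega)]
    ring
  -- linearity of pd through JG6 c d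
  have hlin : ∀ μ : Fin 6, pd μ (fun y => JG6 G y c d) x
      = ∑ e, E6 c e d * pd μ (fun y => pd e G y) x := by
    intro μ
    show fderiv ℝ (fun y => ∑ e, E6 c e d * pd e G y) x (Pi.single μ 1) = _
    rw [fderiv_fun_sum (fun e _ => ((hd1 e).const_mul _)), ContinuousLinearMap.sum_apply]
    refine Finset.sum_congr rfl fun e _ => ?_
    rw [fderiv_const_mul (hd1 e)]
    simp [pd]
  calc
    ∑ μ, (JG6 G x a μ * pd μ (fun y => JG6 G y c d) x
          + JG6 G x c μ * pd μ (fun y => JG6 G y d a) x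
          + JG6 G x d μ * pd μ (fun y => JG6 G y a c) x)
        = ∑ μ, ∑ b, ∑ e, (E6 a b μ * pd b G x) * (E6 c e d * pd μ (fun y => pd e G y) x) := by
          refine Finset.sum_congr rfl fun μ _ => ?_
          rw [hJda, hJac]
          simp only [pd_zero_fun, mul_zero, add_zero]
          rw [hlin, JG6, Finset.sum_mul]
          refine Finset.sum_congr rfl fun b _ => ?_
          rw [Finset.mul_sum]
    _ = ∑ μ, ∑ b, ∑ e,
            E6 a μ b * E6 c d e * pd b G x * pd e (fun y => pd μ G y) x := by
          refine Finset.sum_congr rfl fun μ _ => Finset.sum_congr rfl fun b _ =>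
            Finset.sum_congr rfl fun e _ => ?_
          rw [E6_swap23 a b μ, E6_swap23 c e d, hsym e μ]
          ring
end
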